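/- Let $\Psi=e^\psi-1$ be an Orlicz function for which there exist constants $K,p>0$ with $\Psi(x)\le Kx^p$ for all $x>K$. Then $\Psi$ satisfies the condition (HJ): there exists $K_0>0$ such that $\psi(su)\le K_0(s\ln(1+s)+s\psi(u))$ for all $s,u\ge K_0$. -/

import Mathlib

open MeasureTheory ProbabilityTheory

/-- An Orlicz function: convex, strictly increasing on `[0,∞)`, vanishing at `0`. -/
def IsOrlicz (Ψ : ℝ → ℝ) : Prop :=
  ConvexOn ℝ (Set.Ici 0) Ψ ∧ StrictMonoOn Ψ (Set.Ici 0) ∧ Ψ 0 = 0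

/-- The associated exponent `ψ` with `Ψ = e^ψ - 1`. -/
noncomputable def orliczExp (Ψ : ℝ → ℝ) (x : ℝ) : ℝ := Real.log (1 + Ψ x)

/-- The Orlicz (Luxemburg) norm of a Banach-space-valued random variable. -/
noncomputable def orliczNorm {Ω : Type*} [MeasurableSpace Ω] (μ : Measure Ω)
    (Ψ : ℝ → ℝ) {F : Type*} [NormedAddCommGroup F] (X : Ω → F) : ℝ :=
  sInf {a : ℝ | 0 < a ∧ ∫⁻ ω, ENNReal.ofReal (Ψ (‖X ω‖ / a)) ∂μ ≤ 1}

/-- `X` has finite Orlicz norm. -/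
def OrliczFinite {Ω : Type*} [MeasurableSpace Ω] (μ : Measure Ω)
    (Ψ : ℝ → ℝ) {F : Type*} [NormedAddCommGroup F] (X : Ω → F) : Prop :=
  ∃ a : ℝ, 0 < a ∧ ∫⁻ ω, ENNReal.ofReal (Ψ (‖X ω‖ / a)) ∂μ ≤ 1

/-- Condition (HJ): `ψ(su) ≤ K (s ln(1+s) + s ψ(u))` for all `s, u ≥ K`. -/
def HJCond (Ψ : ℝ → ℝ) : Prop :=
  ∃ K > (0:ℝ), ∀ s u : ℝ, K ≤ s → K ≤ u →
    orliczExp Ψ (s * u) ≤ K * (s * Real.log (1 + s) + s * orliczExp Ψ u)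

/-- A Rademacher (symmetric ±1) random variable. -/
def IsRademacher {Ω : Type*} [MeasurableSpace Ω] (μ : Measure Ω) (ε : Ω → ℝ) : Prop :=
  μ {ω | ε ω = 1} = 1/2 ∧ μ {ω | ε ω = -1} = 1/2

/-!
Polynomial growth gives `ψ(su) ≤ log (1+K) + p log (1+s) + p log (1+u)`, and the first two
terms are `O(s log (1+s))`. For the third, convexity and `Ψ 0 = 0` give `Ψ u ≥ Ψ 1 · u` for
`u ≥ 1`, hence `log (1+u) ≤ 2 ψ(u)` once `u ≥ Ψ(1)⁻²`.
-/

namespace IsOrlicz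

variable {Ψ : ℝ → ℝ}

lemma nonneg (hΨ : IsOrlicz Ψ) {x : ℝ} (hx : 0 ≤ x) : 0 ≤ Ψ x := by
  rw [← hΨ.2.2]
  exact hΨ.2.1.monotoneOn Set.self_mem_Ici hx hx

lemma apply_one_pos (hΨ : IsOrlicz Ψ) : 0 < Ψ 1 := by
  rw [← hΨ.2.2]
  exact hΨ.2.1 Set.self_mem_Ici (Set.mem_Ici.2 zero_le_one) zero_lt_one

lemma apply_one_mul_le (hΨ : IsOrlicz Ψ) {x : ℝ} (hx : 1 ≤ x) : Ψ 1 * x ≤ Ψ x := by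
  have hx0 : 0 < x := zero_lt_one.trans_le hx
  have hslope := hΨ.1.secant_mono Set.self_mem_Ici (Set.mem_Ici.2 zero_le_one) hx0.le
    one_ne_zero hx0.ne' hx
  simp only [hΨ.2.2, sub_zero, div_one] at hslope
  exact (le_div_iff₀ hx0).1 hslope

lemma log_one_add_le_two_mul_orliczExp (hΨ : IsOrlicz Ψ) {u : ℝ} (hu : 1 ≤ u)
    (hcu : (Ψ 1 ^ 2)⁻¹ ≤ u) : Real.log (1 + u) ≤ 2 * orliczExp Ψ u := by
  have hc := hΨ.apply_one_pos
  have hcu' : 1 ≤ Ψ 1 ^ 2 * u := by rwa [inv_le_iff_one_le_mul₀' (by positivity)] at hcu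
  have hsq : 1 + u ≤ (1 + Ψ 1 * u) ^ 2 := by nlinarith
  calc Real.log (1 + u) ≤ Real.log ((1 + Ψ 1 * u) ^ 2) := Real.log_le_log (by linarith) hsq
    _ = 2 * Real.log (1 + Ψ 1 * u) := by rw [Real.log_pow]; norm_num
    _ ≤ 2 * orliczExp Ψ u := by
      unfold orliczExp
      gcongr
      exact hΨ.apply_one_mul_le hu

end IsOrlicz

lemma orliczExp_nonneg {Ψ : ℝ → ℝ} (hΨ : IsOrlicz Ψ) {x : ℝ} (hx : 0 ≤ x) :
    0 ≤ orliczExp Ψ x :=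
  Real.log_nonneg (by linarith [hΨ.nonneg hx])

lemma log_one_add_mul_mul_rpow_le {K p s u : ℝ} (hK : 0 ≤ K) (hp : 0 ≤ p) (hs : 0 ≤ s)
    (hu : 0 ≤ u) :
    Real.log (1 + K * (s * u) ^ p) ≤
      Real.log (1 + K) + p * Real.log (1 + s) + p * Real.log (1 + u) := by
  have hsu : s * u ≤ (1 + s) * (1 + u) := by nlinarith
  have hpow : (s * u) ^ p ≤ ((1 + s) * (1 + u)) ^ p := by gcongr
  have hone : 1 ≤ ((1 + s) * (1 + u)) ^ p := Real.one_le_rpow (by nlinarith) hp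
  calc Real.log (1 + K * (s * u) ^ p)
      ≤ Real.log ((1 + K) * ((1 + s) * (1 + u)) ^ p) :=
        Real.log_le_log (by positivity) (by nlinarith)
    _ = Real.log (1 + K) + p * Real.log (1 + s) + p * Real.log (1 + u) := by
      rw [Real.log_mul (by positivity) (by positivity), Real.log_rpow (by positivity),
        Real.log_mul (by positivity) (by positivity)]
      ring

/-- `log (1+K)` and `log (1+s)` are absorbed by `s log (1+s) ≥ log 2`, and `v` by `s v`. -/
lemma add_le_mul_mul_log_one_add_add {A p s v M : ℝ} (hA : 0 ≤ A) (hp : 0 ≤ p) (hs : 1 ≤ s)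
    (hv : 0 ≤ v) (hM : A + 2 * p ≤ M) :
    A * Real.log 2 + p * Real.log (1 + s) + p * (2 * v) ≤
      M * (s * Real.log (1 + s) + s * v) := by
  have hlog : Real.log 2 ≤ Real.log (1 + s) := Real.log_le_log (by norm_num) (by linarith)
  have hlog2 : 0 < Real.log 2 := Real.log_pos (by norm_num)
  have hslog : Real.log (1 + s) ≤ s * Real.log (1 + s) := le_mul_of_one_le_left (by linarith) hs
  have hsv : v ≤ s * v := le_mul_of_one_le_left hv hs
  nlinarith

/-- Polynomial growth of `Ψ` implies condition (HJ). -/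
theorem stmt8 {Ψ : ℝ → ℝ} (hΨ : IsOrlicz Ψ) {K p : ℝ} (hK : 0 < K) (hp : 0 < p)
    (hbound : ∀ x > K, Ψ x ≤ K * x ^ p) :
    HJCond Ψ := by
  set A := Real.log (1 + K) / Real.log 2
  have hA : 0 ≤ A := div_nonneg (Real.log_nonneg (by linarith)) (Real.log_nonneg (by norm_num))
  set K₀ := max (A + 2 * p) (max (K + 1) (Ψ 1 ^ 2)⁻¹)
  have hK₀ : K + 1 ≤ K₀ := le_max_of_le_right (le_max_left _ _)
  refine ⟨K₀, by linarith, fun s u hs hu => ?_⟩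
  have hs1 : 1 ≤ s := by linarith
  have hu1 : 1 ≤ u := by linarith
  have hsu : K < s * u := by nlinarith
  calc orliczExp Ψ (s * u) ≤ Real.log (1 + K * (s * u) ^ p) :=
        Real.log_le_log (by linarith [hΨ.nonneg (by positivity : 0 ≤ s * u)])
          (by linarith [hbound _ hsu])
    _ ≤ Real.log (1 + K) + p * Real.log (1 + s) + p * Real.log (1 + u) :=
        log_one_add_mul_mul_rpow_le hK.le hp.le (by linarith) (by linarith)
    _ ≤ A * Real.log 2 + p * Real.log (1 + s) + p * (2 * orliczExp Ψ u) := by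
        rw [div_mul_cancel₀ _ (Real.log_pos one_lt_two).ne']
        gcongr
        exact hΨ.log_one_add_le_two_mul_orliczExp hu1
          ((le_max_right _ _).trans ((le_max_right _ _).trans hu))
    _ ≤ K₀ * (s * Real.log (1 + s) + s * orliczExp Ψ u) :=
        add_le_mul_mul_log_one_add_add hA hp.le hs1 (orliczExp_nonneg hΨ (by linarith))
          (le_max_left _ _)
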